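/- Let λ > 0, β > 0, and let g be a discrete-time Wiener process with parameter λ on an index set contained in [0, 1] and containing the points e^{-βt} for t in some set S ⊆ [0, ∞) (together with 0). Define f(t) = g(e^{-βt}) for t ∈ S. Then f is a zero-mean Gaussian process whose covariance function is Cov(f(t), f(s)) = λ·min{e^{-βt}, e^{-βs}} for all t, s ∈ S. -/

import Mathlib

/-!
Each `f s = g (e^{-βs})` agrees a.s. with the increment `g (e^{-βs}) - g 0`, a centred Gaussian of
variance `λ e^{-βs}`. For `0 < τ₁ ≤ τ₂`, writing `g τ₂ = g τ₁ + (g τ₂ - g τ₁)` with independent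
summands gives `E[g τ₁ g τ₂] = Var (g τ₁) = λ τ₁`. A linear combination of values at finitely many
points `τ_j` telescopes, along the increasing enumeration of `{0} ∪ {τ_j}`, into a linear
combination of independent Gaussian increments, hence is Gaussian.
-/

open MeasureTheory ProbabilityTheory Real
open scoped NNReal

lemma Fin.apply_sub_apply_zero_eq_sum {M : Type*} [AddCommGroup M] {n : ℕ}
    (G : Fin (n + 1) → M) (r : Fin (n + 1)) :
    G r - G 0 = ∑ i : Fin n, if i.castSucc < r then G i.succ - G i.castSucc else 0 := by
  induction r using Fin.induction with
  | zero => simp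
  | succ r ih =>
    have hsplit : ∀ i : Fin n, (if i.castSucc < r.succ then G i.succ - G i.castSucc else 0) =
        (if i.castSucc < r.castSucc then G i.succ - G i.castSucc else 0) +
          if i = r then G i.succ - G i.castSucc else 0 := fun i ↦ by
      rcases lt_trichotomy i r with h | rfl | h
      · simp [h, h.ne, Fin.castSucc_lt_succ_iff.2 h.le]
      · simp
      · simp [h.ne', not_lt_of_gt h, not_le_of_gt h]
    rw [Finset.sum_congr rfl fun i _ ↦ hsplit i, Finset.sum_add_distrib, ← ih,
      Finset.sum_ite_eq']
    simp

lemma Fin.sum_mul_apply_sub_apply_zero {R : Type*} [Ring R] {n k : ℕ} (G : Fin (n + 1) → R)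
    (r : Fin k → Fin (n + 1)) (c : Fin k → R) :
    ∑ j, c j * (G (r j) - G 0) =
      ∑ i : Fin n, (∑ j, if i.castSucc < r j then c j else 0) * (G i.succ - G i.castSucc) := by
  simp only [Fin.apply_sub_apply_zero_eq_sum, Finset.mul_sum, Finset.sum_mul, mul_ite, ite_mul,
    mul_zero, zero_mul]
  exact Finset.sum_comm

lemma Finset.exists_strictMono_fin_zero_eq_of_forall_le {α : Type*} [LinearOrder α]
    (s : Finset α) {a : α} (ha : a ∈ s) (hmin : ∀ x ∈ s, a ≤ x) :
    ∃ (n : ℕ) (u : Fin (n + 1) → α), StrictMono u ∧ u 0 = a ∧ Set.range u = s := by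
  have hcard : s.card = s.card - 1 + 1 := (Nat.succ_pred_eq_of_pos (card_pos.2 ⟨a, ha⟩)).symm
  refine ⟨_, s.orderEmbOfFin hcard, (s.orderEmbOfFin hcard).strictMono, ?_,
    s.range_orderEmbOfFin hcard⟩
  rw [← Fin.mk_zero, orderEmbOfFin_zero hcard (Nat.succ_pos _)]
  exact le_antisymm (min'_le s a ha) (le_min' s _ a hmin)

section

variable {Ω : Type*} {mΩ : MeasurableSpace Ω} {P : Measure Ω}

lemma ProbabilityTheory.iIndepFun.hasLaw_sum_gaussianReal {ι : Type*} [Fintype ι]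
    {X : ι → Ω → ℝ} {m : ι → ℝ} {v : ι → ℝ≥0} (hind : iIndepFun X P)
    (hX : ∀ i, HasLaw (X i) (gaussianReal (m i) (v i)) P) :
    HasLaw (fun ω ↦ ∑ i, X i ω) (gaussianReal (∑ i, m i) (∑ i, v i)) P := by
  have hG := hind.hasGaussianLaw_fun_sum fun i ↦ (hX i).hasGaussianLaw
  have : IsProbabilityMeasure P := hG.isProbabilityMeasure
  refine ⟨hG.aemeasurable, ?_⟩
  have hmean : P[fun ω ↦ ∑ i, X i ω] = ∑ i, m i := by
    rw [integral_finsetSum _ fun i _ ↦ (hX i).hasGaussianLaw.integrable]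
    simp_rw [fun i ↦ (hX i).integral_eq, integral_id_gaussianReal]
  have hvar : Var[fun ω ↦ ∑ i, X i ω; P] = ∑ i, (v i : ℝ) := by
    rw [← Finset.sum_fn, IndepFun.variance_sum (fun i _ ↦ (hX i).hasGaussianLaw.memLp_two)
      fun i _ j _ hij ↦ hind.indepFun hij]
    simp_rw [fun i ↦ (hX i).variance_eq, variance_id_gaussianReal]
  rw [hG.map_eq_gaussianReal, hmean, hvar, ← NNReal.coe_sum, Real.toNNReal_coe]

structure IsWienerProcessOn (g : ℝ → Ω → ℝ) (T : Set ℝ) (lam : ℝ) (P : Measure Ω) : Prop where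
  zero_mem : (0 : ℝ) ∈ T
  ae_eq_zero : ∀ᵐ ω ∂P, g 0 ω = 0
  iIndepFun_increments : ∀ (k : ℕ) (m : Fin (k + 1) → ℝ), StrictMono m → (∀ j, m j ∈ T) →
    iIndepFun (fun j : Fin k ↦ fun ω ↦ g (m j.succ) ω - g (m j.castSucc) ω) P
  hasLaw_sub : ∀ τi ∈ T, ∀ τj ∈ T, τj < τi →
    HasLaw (fun ω ↦ g τi ω - g τj ω) (gaussianReal 0 (lam * (τi - τj)).toNNReal) P

namespace IsWienerProcessOn

variable {g : ℝ → Ω → ℝ} {T : Set ℝ} {lam : ℝ}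

lemma hasLaw (hg : IsWienerProcessOn g T lam P) {τ : ℝ} (hτ : τ ∈ T) (hτ₀ : 0 < τ) :
    HasLaw (g τ) (gaussianReal 0 (lam * τ).toNNReal) P := by
  have h := hg.hasLaw_sub τ hτ 0 hg.zero_mem hτ₀
  rw [sub_zero] at h
  exact h.congr (hg.ae_eq_zero.mono fun ω h₀ ↦ by simp [h₀])

lemma integral_eq_zero (hg : IsWienerProcessOn g T lam P) {τ : ℝ} (hτ : τ ∈ T) (hτ₀ : 0 < τ) :
    ∫ ω, g τ ω ∂P = 0 :=
  (hg.hasLaw hτ hτ₀).integral_eq.trans integral_id_gaussianReal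

lemma indepFun_sub (hg : IsWienerProcessOn g T lam P) {τ₁ τ₂ : ℝ} (hτ₁ : τ₁ ∈ T) (hτ₂ : τ₂ ∈ T)
    (h₀ : 0 < τ₁) (h₁₂ : τ₁ < τ₂) :
    IndepFun (g τ₁) (fun ω ↦ g τ₂ ω - g τ₁ ω) P := by
  have hmono : StrictMono ![0, τ₁, τ₂] := by
    refine Fin.strictMono_iff_lt_succ.2 fun i ↦ ?_
    fin_cases i <;> simpa
  have hmem : ∀ j, ![0, τ₁, τ₂] j ∈ T := by
    intro j
    fin_cases j
    exacts [hg.zero_mem, hτ₁, hτ₂]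
  have h := (hg.iIndepFun_increments 2 _ hmono hmem).indepFun (show (0 : Fin 2) ≠ 1 by decide)
  refine h.congr (hg.ae_eq_zero.mono fun ω h₀ ↦ ?_) .rfl
  simp [h₀]

lemma integral_mul_eq_mul_of_le (hg : IsWienerProcessOn g T lam P) (hlam : 0 ≤ lam) {τ₁ τ₂ : ℝ}
    (hτ₁ : τ₁ ∈ T) (hτ₂ : τ₂ ∈ T) (h₀ : 0 < τ₁) (h₁₂ : τ₁ ≤ τ₂) :
    ∫ ω, g τ₁ ω * g τ₂ ω ∂P = lam * τ₁ := by
  have hX := hg.hasLaw hτ₁ h₀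
  have : IsProbabilityMeasure P := hX.isProbabilityMeasure
  have hX₂ : MemLp (g τ₁) 2 P := hX.hasGaussianLaw.memLp_two
  have hsq : ∫ ω, g τ₁ ω ^ 2 ∂P = lam * τ₁ := by
    rw [← variance_of_integral_eq_zero hX.aemeasurable (hg.integral_eq_zero hτ₁ h₀),
      hX.variance_eq, variance_id_gaussianReal, Real.coe_toNNReal _ (by positivity)]
  obtain rfl | hlt := h₁₂.eq_or_lt
  · simpa only [← sq] using hsq
  have hY := hg.hasLaw_sub τ₂ hτ₂ τ₁ hτ₁ hlt
  have hind := hg.indepFun_sub hτ₁ hτ₂ h₀ hlt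
  have hXY : Integrable (fun ω ↦ g τ₁ ω * (g τ₂ ω - g τ₁ ω)) P :=
    hind.integrable_mul hX.hasGaussianLaw.integrable hY.hasGaussianLaw.integrable
  calc ∫ ω, g τ₁ ω * g τ₂ ω ∂P
      = ∫ ω, (g τ₁ ω ^ 2 + g τ₁ ω * (g τ₂ ω - g τ₁ ω)) ∂P := by congr with ω; ring
    _ = lam * τ₁ + (∫ ω, g τ₁ ω ∂P) * ∫ ω, g τ₂ ω - g τ₁ ω ∂P := by
      rw [integral_add hX₂.integrable_sq hXY, hsq,
        hind.integral_fun_mul_eq_mul_integral hX.aemeasurable.aestronglyMeasurable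
          hY.aemeasurable.aestronglyMeasurable]
    _ = lam * τ₁ := by rw [hg.integral_eq_zero hτ₁ h₀, zero_mul, add_zero]

lemma integral_mul_eq_mul_min (hg : IsWienerProcessOn g T lam P) (hlam : 0 ≤ lam) {τ₁ τ₂ : ℝ}
    (hτ₁ : τ₁ ∈ T) (hτ₂ : τ₂ ∈ T) (h₁ : 0 < τ₁) (h₂ : 0 < τ₂) :
    ∫ ω, g τ₁ ω * g τ₂ ω ∂P = lam * min τ₁ τ₂ := by
  rcases le_total τ₁ τ₂ with h₁₂ | h₂₁
  · rw [min_eq_left h₁₂, hg.integral_mul_eq_mul_of_le hlam hτ₁ hτ₂ h₁ h₁₂]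
  · simp_rw [min_eq_right h₂₁, mul_comm (g τ₁ _)]
    exact hg.integral_mul_eq_mul_of_le hlam hτ₂ hτ₁ h₂ h₂₁

lemma exists_hasLaw_gaussianReal_sum_mul (hg : IsWienerProcessOn g T lam P) {k : ℕ} (τ : Fin k → ℝ)
    (hτ : ∀ j, τ j ∈ T) (hτ₀ : ∀ j, 0 ≤ τ j) (c : Fin k → ℝ) :
    ∃ v : ℝ≥0, HasLaw (fun ω ↦ ∑ j, c j * g (τ j) ω) (gaussianReal 0 v) P := by
  obtain ⟨n, u, hu, hu₀, hrange⟩ :=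
    (insert 0 (Finset.univ.image τ)).exists_strictMono_fin_zero_eq_of_forall_le
      (Finset.mem_insert_self _ _) (by simpa using hτ₀)
  have huT : ∀ i, u i ∈ T := fun i ↦ by
    have hi := hrange ▸ Set.mem_range_self i
    simp only [Finset.coe_insert, Finset.coe_image, Finset.coe_univ, Set.image_univ,
      Set.mem_insert_iff, Set.mem_range] at hi
    obtain h | ⟨j, hj⟩ := hi
    · exact h ▸ hg.zero_mem
    · exact hj ▸ hτ j
  have hr : ∀ j, ∃ i, u i = τ j := fun j ↦ by
    rw [← Set.mem_range, hrange]
    simp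
  choose r hr using hr
  set a : Fin n → ℝ := fun i ↦ ∑ j, if i.castSucc < r j then c j else 0
  have hind : iIndepFun (fun i ω ↦ a i * (g (u i.succ) ω - g (u i.castSucc) ω)) P :=
    (hg.iIndepFun_increments n u hu huT).comp (fun i x ↦ a i * x)
      fun i ↦ measurable_const_mul (a i)
  have hsum := hind.hasLaw_sum_gaussianReal fun i ↦ gaussianReal_const_mul
    (hg.hasLaw_sub _ (huT _) _ (huT _) (hu i.castSucc_lt_succ)) (a i)
  simp only [mul_zero, Finset.sum_const_zero] at hsum
  refine ⟨_, hsum.congr (hg.ae_eq_zero.mono fun ω h₀ ↦ ?_)⟩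
  simpa only [hr, hu₀, h₀, sub_zero] using Fin.sum_mul_apply_sub_apply_zero (fun i ↦ g (u i) ω) r c

end IsWienerProcessOn

end

theorem stmt9_general {Ω : Type*} [MeasureSpace Ω] [IsProbabilityMeasure (ℙ : Measure Ω)]
    (lam β : ℝ) (hlam : 0 < lam)
    (T S : Set ℝ) (h0T : (0 : ℝ) ∈ T)
    (hST : ∀ s ∈ S, Real.exp (-β * s) ∈ T)
    (g : ℝ → Ω → ℝ) (hgmeas : ∀ τ, Measurable (g τ))
    (hg0 : ∀ᵐ ω ∂ℙ, g 0 ω = 0)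
    -- independent increments over `T`
    (hincr : ∀ (k : ℕ) (m : Fin (k + 1) → ℝ), StrictMono m → (∀ j, m j ∈ T) →
      iIndepFun
        (fun j : Fin k => fun ω => g (m j.succ) ω - g (m j.castSucc) ω) ℙ)
    -- Gaussian increments: `g(τ_i) − g(τ_j) ~ N(0, λ(τ_i − τ_j))` for `τ_j < τ_i` in `T`
    (hgauss : ∀ τi ∈ T, ∀ τj ∈ T, τj < τi →
      Measure.map (fun ω => g τi ω - g τj ω) ℙ
        = gaussianReal 0 (Real.toNNReal (lam * (τi - τj))))
    (f : ℝ → Ω → ℝ) (hf : ∀ s ω, f s ω = g (Real.exp (-β * s)) ω) :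
    -- `f` is zero mean on `S`
    (∀ s ∈ S, ∫ ω, f s ω ∂ℙ = 0) ∧
    -- `f` is a Gaussian process: every finite linear combination of its values is Gaussian
    (∀ (k : ℕ) (m : Fin k → ℝ), (∀ j, m j ∈ S) → ∀ c : Fin k → ℝ, ∃ v : NNReal,
      Measure.map (fun ω => ∑ j : Fin k, c j * f (m j) ω) ℙ = gaussianReal 0 v) ∧
    -- the covariance function of `f` is the stable spline kernel
    (∀ s₁ ∈ S, ∀ s₂ ∈ S,
      ∫ ω, f s₁ ω * f s₂ ω ∂ℙ
        = lam * min (Real.exp (-β * s₁)) (Real.exp (-β * s₂))) := by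
  have hg : IsWienerProcessOn g T lam ℙ :=
    ⟨h0T, hg0, hincr, fun τi hi τj hj hlt ↦ ⟨by fun_prop, hgauss τi hi τj hj hlt⟩⟩
  simp_rw [hf]
  refine ⟨fun s hs ↦ hg.integral_eq_zero (hST s hs) (exp_pos _), fun k m hm c ↦ ?_,
    fun s₁ hs₁ s₂ hs₂ ↦
      hg.integral_mul_eq_mul_min hlam.le (hST s₁ hs₁) (hST s₂ hs₂) (exp_pos _) (exp_pos _)⟩
  obtain ⟨v, hv⟩ :=
    hg.exists_hasLaw_gaussianReal_sum_mul _ (fun j ↦ hST _ (hm j)) (fun j ↦ (exp_pos _).le) c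
  exact ⟨v, hv.map_eq⟩

/-- covariance computation underlying Proposition 3. Let `λ, β > 0`
and let `g` be a discrete-time Wiener process with parameter `λ` on an index set
`T ⊆ [0, 1]` containing `0` and the points `e^{-βt}` for `t ∈ S ⊆ [0, ∞)`. Then
`f(t) = g(e^{-βt})`, `t ∈ S`, is a zero-mean Gaussian process with covariance function
`Cov(f(t), f(s)) = λ·min{e^{-βt}, e^{-βs}}` (the first-order stable spline kernel). -/
theorem stmt9 {Ω : Type*} [MeasureSpace Ω] [IsProbabilityMeasure (ℙ : Measure Ω)]
    (lam β : ℝ) (hlam : 0 < lam) (hβ : 0 < β)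
    (T S : Set ℝ) (hT : T ⊆ Set.Icc 0 1) (h0T : (0 : ℝ) ∈ T)
    (hS : S ⊆ Set.Ici 0) (hST : ∀ s ∈ S, Real.exp (-β * s) ∈ T)
    (g : ℝ → Ω → ℝ) (hgmeas : ∀ τ, Measurable (g τ))
    (hg0 : ∀ᵐ ω ∂ℙ, g 0 ω = 0)
    -- independent increments over `T`
    (hincr : ∀ (k : ℕ) (m : Fin (k + 1) → ℝ), StrictMono m → (∀ j, m j ∈ T) →
      iIndepFun
        (fun j : Fin k => fun ω => g (m j.succ) ω - g (m j.castSucc) ω) ℙ)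
    -- Gaussian increments: `g(τ_i) − g(τ_j) ~ N(0, λ(τ_i − τ_j))` for `τ_j < τ_i` in `T`
    (hgauss : ∀ τi ∈ T, ∀ τj ∈ T, τj < τi →
      Measure.map (fun ω => g τi ω - g τj ω) ℙ
        = gaussianReal 0 (Real.toNNReal (lam * (τi - τj))))
    (f : ℝ → Ω → ℝ) (hf : ∀ s ω, f s ω = g (Real.exp (-β * s)) ω) :
    -- `f` is zero mean on `S`
    (∀ s ∈ S, ∫ ω, f s ω ∂ℙ = 0) ∧
    -- `f` is a Gaussian process: every finite linear combination of its values is Gaussian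
    (∀ (k : ℕ) (m : Fin k → ℝ), (∀ j, m j ∈ S) → ∀ c : Fin k → ℝ, ∃ v : NNReal,
      Measure.map (fun ω => ∑ j : Fin k, c j * f (m j) ω) ℙ = gaussianReal 0 v) ∧
    -- the covariance function of `f` is the stable spline kernel
    (∀ s₁ ∈ S, ∀ s₂ ∈ S,
      ∫ ω, f s₁ ω * f s₂ ω ∂ℙ
        = lam * min (Real.exp (-β * s₁)) (Real.exp (-β * s₂))) :=
  stmt9_general lam β hlam T S h0T hST g hgmeas hg0 hincr hgauss f hf
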